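/- For σ > 1, the quantity h(σ) = 2σ²·log σ/(σ²−1) is strictly positive, and consequently z₊ > z₋ where z₊ = −A·g + √((A/σ)²·g² + h(σ)/σ²) and z₋ = (A/σ)·g − √(A²·g² + h(σ)) for any g ≥ 0 and A > 0; hence the error of the high-variance class exceeds that of the low-variance class: Φ(z₊) > Φ(z₋). -/

import Mathlib

open Real Set

/-- Standard normal cumulative distribution function. -/
noncomputable def stdNormalCDF (z : ℝ) : ℝ :=
  ∫ t in Set.Iic z, (Real.sqrt (2 * Real.pi))⁻¹ * Real.exp (-t ^ 2 / 2)

/-!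
Put `c = A g` and `s = √(c² + h)`. Since `√(x / σ²) = √x / σ`, the two thresholds are
`z₊ = -c + s / σ` and `z₋ = c / σ - s`, so `z₊ - z₋ = (1 + 1/σ) (s - c)`, which is positive
because `h > 0` forces `s > |c|`. The comparison of the errors then follows from the strict
monotonicity of `Φ`, whose density is everywhere positive.
-/

lemma integrable_stdNormal_density :
    MeasureTheory.Integrable fun t : ℝ => (√(2 * π))⁻¹ * exp (-t ^ 2 / 2) := by
  convert (integrable_exp_neg_mul_sq (by norm_num : (0 : ℝ) < 1 / 2)).const_mul (√(2 * π))⁻¹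
    using 2 with t
  ring_nf

lemma stdNormalCDF_strictMono : StrictMono stdNormalCDF := by
  intro a b hab
  have hint := integrable_stdNormal_density
  have hdiff : stdNormalCDF b - stdNormalCDF a
      = ∫ t in a..b, (√(2 * π))⁻¹ * exp (-t ^ 2 / 2) := by
    unfold stdNormalCDF
    rw [intervalIntegral.integral_Iic_sub_Iic hint.integrableOn hint.integrableOn]
  have hpos : 0 < ∫ t in a..b, (√(2 * π))⁻¹ * exp (-t ^ 2 / 2) :=
    intervalIntegral.intervalIntegral_pos_of_pos_on hint.integrableOn.intervalIntegrable
      (fun _ _ => by positivity) hab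
  linarith

lemma mul_sq_mul_log_div_sq_sub_one_pos {σ : ℝ} (hσ : 1 < σ) :
    0 < 2 * σ ^ 2 * log σ / (σ ^ 2 - 1) := by
  have hlog : 0 < log σ := log_pos hσ
  have hden : 0 < σ ^ 2 - 1 := by nlinarith
  positivity

lemma sqrt_div_sq_mul_sq_add_div_sq {σ : ℝ} (hσ : 0 < σ) (a g h : ℝ) :
    √((a / σ) ^ 2 * g ^ 2 + h / σ ^ 2) = √((a * g) ^ 2 + h) / σ := by
  rw [show (a / σ) ^ 2 * g ^ 2 + h / σ ^ 2 = ((a * g) ^ 2 + h) / σ ^ 2 by field_simp,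
    sqrt_div' _ (sq_nonneg σ), sqrt_sq hσ.le]

lemma div_sub_sqrt_lt_neg_add_sqrt_div {σ h : ℝ} (hσ : 0 < σ) (hh : 0 < h) (c : ℝ) :
    c / σ - √(c ^ 2 + h) < -c + √(c ^ 2 + h) / σ := by
  have hc : c < √(c ^ 2 + h) := lt_sqrt_of_sq_lt (by linarith)
  have hcσ : 0 < (√(c ^ 2 + h) - c) / σ := div_pos (sub_pos.2 hc) hσ
  rw [sub_div] at hcσ
  linarith

theorem stmt4_general (σ A g : ℝ) (hσ : 1 < σ)
    (h zp zm : ℝ)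
    (hh : h = 2 * σ ^ 2 * Real.log σ / (σ ^ 2 - 1))
    (hzp : zp = -A * g + Real.sqrt ((A / σ) ^ 2 * g ^ 2 + h / σ ^ 2))
    (hzm : zm = (A / σ) * g - Real.sqrt (A ^ 2 * g ^ 2 + h)) :
    0 < h ∧ zm < zp ∧ stdNormalCDF zm < stdNormalCDF zp := by
  have hσ0 : 0 < σ := by linarith
  have hh0 : 0 < h := hh ▸ mul_sq_mul_log_div_sq_sub_one_pos hσ
  have hzmzp : zm < zp := by
    rw [hzp, hzm, sqrt_div_sq_mul_sq_add_div_sq hσ0, neg_mul, div_mul_eq_mul_div, ← mul_pow]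
    exact div_sub_sqrt_lt_neg_add_sqrt_div hσ0 hh0 (A * g)
  exact ⟨hh0, hzmzp, stdNormalCDF_strictMono hzmzp⟩

theorem stmt4 (σ A g : ℝ) (hσ : 1 < σ) (hA : 0 < A) (hg : 0 ≤ g)
    (h zp zm : ℝ)
    (hh : h = 2 * σ ^ 2 * Real.log σ / (σ ^ 2 - 1))
    (hzp : zp = -A * g + Real.sqrt ((A / σ) ^ 2 * g ^ 2 + h / σ ^ 2))
    (hzm : zm = (A / σ) * g - Real.sqrt (A ^ 2 * g ^ 2 + h)) :
    0 < h ∧ zm < zp ∧ stdNormalCDF zm < stdNormalCDF zp :=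
  stmt4_general σ A g hσ h zp zm hh hzp hzm
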